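/- Let e_0, …, e_{2N} be pairwise distinct points of modulus 1 with e_{2j+1} = -e_{2j}, e_{2j}² = e_j for 0 ≤ j ≤ N, and suppose |l_{k-1,k}(z)| ≤ 1 for all |z| ≤ 1 and 2 ≤ k ≤ 2N+1 (the Leja maximality property). Then the quadratic Lebesgue constants satisfy Λ²_{2N+1,2} ≤ (1/2)Λ²_{N+1,2} + 2Λ²_{N,2} + 1/2, where Λ_{k,2} = sup_{|z|≤1} (Σ_{j=0}^{k-1} |l_{j,k}(z)|²)^{1/2}. -/

import Mathlib

/-!
Pair the nodes `e (2j)` and `e (2j+1) = -e (2j)`. Because `e (2m) ^ 2 = e m`, the factors of a pair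
multiply to `(z² - e m) / (c² - e m)`, so `l_{i,2N+1}(z)` for `i ∈ {2j, 2j+1}` is an explicit
rational coefficient times `l_{j,N}(z²)`. The sum of the pair is `l_{j,N+1}(z²)`; the difference is
`-(b/a) l_{N,N+1}(z²) l_{j,N}(e N) + (z/a) l_{j,N}(z²)` with `|a| = |b| = 1`, so the Leja bound
`|l_{N,N+1}| ≤ 1` gives `|difference| ≤ |l_{j,N}(e N)| + |l_{j,N}(z²)|`. The parallelogram law
`|u|² + |v|² = (|u + v|² + |u - v|²) / 2` then bounds each pair, and the last node contributes
`|l_{N,N+1}(z²)|² ≤ (|l_{N,N+1}(z²)|² + 1) / 2`.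
-/

/-- The fundamental Lagrange interpolation polynomial `l_{j,k}` at nodes `e 0, …, e (k-1)`. -/
noncomputable def lagr (e : ℕ → ℂ) (j k : ℕ) (z : ℂ) : ℂ :=
  ∏ i ∈ (Finset.range k).erase j, (z - e i) / (e j - e i)

/-- The quadratic Lebesgue constant `Λ_{k,2}` for the nodes `e 0, …, e (k-1)`. -/
noncomputable def quadLeb (e : ℕ → ℂ) (k : ℕ) : ℝ :=
  ⨆ z : Metric.closedBall (0 : ℂ) 1,
    Real.sqrt (∑ j ∈ Finset.range k, ‖lagr e j k (z : ℂ)‖ ^ 2)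

open Finset

@[to_additive sum_range_two_mul]
lemma prod_range_two_mul {M : Type*} [CommMonoid M] (g : ℕ → M) (N : ℕ) :
    ∏ i ∈ range (2 * N), g i = ∏ m ∈ range N, g (2 * m) * g (2 * m + 1) := by
  induction N with
  | zero => simp
  | succ n ih => rw [mul_add_one, prod_range_succ, prod_range_succ, ih, prod_range_succ, mul_assoc]

lemma prod_erase_range_two_mul {M : Type*} [CommMonoid M] (g : ℕ → M) {N j i i' : ℕ}
    (hj : j < N) (hii' : i = 2 * j ∧ i' = 2 * j + 1 ∨ i = 2 * j + 1 ∧ i' = 2 * j) :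
    ∏ x ∈ (range (2 * N)).erase i, g x
      = g i' * ∏ m ∈ (range N).erase j, g (2 * m) * g (2 * m + 1) := by
  have hi : i ∈ range (2 * N) := mem_range.2 (by omega)
  rw [← sdiff_singleton_eq_erase, ← one_mul (∏ x ∈ _ \ _, g x), ← prod_update_of_mem hi,
    prod_range_two_mul, ← mul_prod_erase _ _ (mem_range.2 hj)]
  congr 1
  · rcases hii' with ⟨rfl, rfl⟩ | ⟨rfl, rfl⟩ <;> simp
  · refine prod_congr rfl fun m hm => ?_
    have hmj := ne_of_mem_erase hm
    rw [Function.update_of_ne (by omega), Function.update_of_ne (by omega)]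

lemma lagr_succ (e : ℕ → ℂ) {j k : ℕ} (hjk : j ≠ k) (w : ℂ) :
    lagr e j (k + 1) w = (w - e k) / (e j - e k) * lagr e j k w := by
  rw [lagr, range_add_one, erase_insert_of_ne hjk.symm, prod_insert (by simp), lagr]

lemma lagr_self_succ (e : ℕ → ℂ) (k : ℕ) (w : ℂ) :
    lagr e k (k + 1) w = ∏ i ∈ range k, (w - e i) / (e k - e i) := by
  rw [lagr, range_add_one, erase_insert notMem_range_self]

-- Both sides are `∏ i < k, (w - e i)` up to a constant; evaluating at `e k` fixes the constant.
lemma sub_mul_lagr {e : ℕ → ℂ} {j k : ℕ} (hj : j < k) (he : ∀ i < k, e i ≠ e k) (w : ℂ) :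
    (w - e j) * lagr e j k w = (e k - e j) * lagr e k (k + 1) w * lagr e j k (e k) := by
  have hjk : (e k - e j) * ((w - e j) / (e k - e j)) = w - e j :=
    mul_div_cancel₀ _ (sub_ne_zero.2 (he j hj).symm)
  rw [lagr_self_succ, ← mul_prod_erase _ _ (mem_range.2 hj), lagr, lagr, ← mul_assoc, hjk,
    mul_assoc, ← prod_mul_distrib]
  refine congrArg _ (prod_congr rfl fun i hi => ?_)
  have hik : e k - e i ≠ 0 :=
    sub_ne_zero.2 (he i (mem_range.1 (mem_of_mem_erase hi))).symm
  rw [div_mul_div_cancel₀ hik]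

lemma lagr_factor_pair_mul {e : ℕ → ℂ} {m : ℕ} (hneg : e (2 * m + 1) = -e (2 * m))
    (hsq : e (2 * m) ^ 2 = e m) (z c : ℂ) :
    (z - e (2 * m)) / (c - e (2 * m)) * ((z - e (2 * m + 1)) / (c - e (2 * m + 1)))
      = (z ^ 2 - e m) / (c ^ 2 - e m) := by
  rw [hneg, div_mul_div_comm, ← hsq]
  congr 1 <;> ring

def pairCoeff {K : Type*} [Field K] (a b z : K) : K :=
  (z - b) / (a - b) * ((z + a) / (2 * a))

section pairCoeff

variable {K : Type*} [Field K] [NeZero (2 : K)] {a b : K}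

lemma pairCoeff_add_neg (ha : a ≠ 0) (hab : a ^ 2 ≠ b ^ 2) (z : K) :
    pairCoeff a b z + pairCoeff (-a) b z = (z ^ 2 - b ^ 2) / (a ^ 2 - b ^ 2) := by
  have h₁ : a - b ≠ 0 := fun h => hab (by linear_combination (a + b) * h)
  have h₂ : -a - b ≠ 0 := fun h => hab (by linear_combination (b - a) * h)
  unfold pairCoeff
  field_simp
  ring

lemma pairCoeff_sub_neg (ha : a ≠ 0) (hab : a ^ 2 ≠ b ^ 2) (z : K) :
    pairCoeff a b z - pairCoeff (-a) b z
      = b / a * ((z ^ 2 - a ^ 2) / (a ^ 2 - b ^ 2)) + z / a := by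
  have h₁ : a - b ≠ 0 := fun h => hab (by linear_combination (a + b) * h)
  have h₂ : -a - b ≠ 0 := fun h => hab (by linear_combination (b - a) * h)
  unfold pairCoeff
  field_simp
  ring

end pairCoeff

lemma lagr_two_mul_add_one_eq_pairCoeff_mul {e : ℕ → ℂ} {N j i i' : ℕ} (hj : j < N)
    (hii' : i = 2 * j ∧ i' = 2 * j + 1 ∨ i = 2 * j + 1 ∧ i' = 2 * j)
    (hneg : ∀ m < N, e (2 * m + 1) = -e (2 * m)) (hsq : ∀ m < N, e (2 * m) ^ 2 = e m)
    (z : ℂ) :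
    lagr e i (2 * N + 1) z = pairCoeff (e i) (e (2 * N)) z * lagr e j N (z ^ 2) := by
  have hei' : e i' = -e i := by
    rcases hii' with ⟨rfl, rfl⟩ | ⟨rfl, rfl⟩ <;> simp [hneg j hj]
  have hei : e i ^ 2 = e j := by
    rcases hii' with ⟨rfl, -⟩ | ⟨rfl, -⟩ <;> simp [hneg j hj, hsq j hj]
  rw [lagr_succ e (by omega), lagr, prod_erase_range_two_mul _ hj hii', lagr, pairCoeff, hei',
    mul_assoc]
  congr 2
  · rw [sub_neg_eq_add, sub_neg_eq_add, two_mul]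
  · refine prod_congr rfl fun m hm => ?_
    have hm : m < N := mem_range.1 (mem_of_mem_erase hm)
    rw [lagr_factor_pair_mul (hneg m hm) (hsq m hm), hei]

lemma lagr_two_mul_self_succ {e : ℕ → ℂ} {N : ℕ} (hneg : ∀ m < N, e (2 * m + 1) = -e (2 * m))
    (hsq : ∀ m ≤ N, e (2 * m) ^ 2 = e m) (z : ℂ) :
    lagr e (2 * N) (2 * N + 1) z = lagr e N (N + 1) (z ^ 2) := by
  rw [lagr_self_succ, lagr_self_succ, prod_range_two_mul]
  refine prod_congr rfl fun m hm => ?_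
  have hm : m < N := mem_range.1 hm
  rw [lagr_factor_pair_mul (hneg m hm) (hsq m hm.le), hsq N le_rfl]

section pair

variable {e : ℕ → ℂ} {N j : ℕ}

lemma lagr_pair_add (hj : j < N) (hneg : ∀ m < N, e (2 * m + 1) = -e (2 * m))
    (hsq : ∀ m ≤ N, e (2 * m) ^ 2 = e m) (hjN : e j ≠ e N) (h0 : e (2 * j) ≠ 0) (z : ℂ) :
    lagr e (2 * j) (2 * N + 1) z + lagr e (2 * j + 1) (2 * N + 1) z
      = lagr e j (N + 1) (z ^ 2) := by
  have hsq' : ∀ m < N, e (2 * m) ^ 2 = e m := fun m hm => hsq m hm.le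
  rw [lagr_two_mul_add_one_eq_pairCoeff_mul hj (.inl ⟨rfl, rfl⟩) hneg hsq',
    lagr_two_mul_add_one_eq_pairCoeff_mul hj (.inr ⟨rfl, rfl⟩) hneg hsq', hneg j hj, ← add_mul,
    pairCoeff_add_neg h0 (by rwa [hsq j hj.le, hsq N le_rfl]), hsq j hj.le, hsq N le_rfl,
    lagr_succ e hj.ne]

lemma lagr_pair_sub (hj : j < N) (hneg : ∀ m < N, e (2 * m + 1) = -e (2 * m))
    (hsq : ∀ m ≤ N, e (2 * m) ^ 2 = e m) (hN : ∀ i < N, e i ≠ e N) (h0 : e (2 * j) ≠ 0)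
    (z : ℂ) :
    lagr e (2 * j) (2 * N + 1) z - lagr e (2 * j + 1) (2 * N + 1) z
      = -(e (2 * N) / e (2 * j) * (lagr e N (N + 1) (z ^ 2) * lagr e j N (e N)))
        + z / e (2 * j) * lagr e j N (z ^ 2) := by
  have hsq' : ∀ m < N, e (2 * m) ^ 2 = e m := fun m hm => hsq m hm.le
  have hT := sub_mul_lagr hj hN (z ^ 2)
  rw [lagr_two_mul_add_one_eq_pairCoeff_mul hj (.inl ⟨rfl, rfl⟩) hneg hsq',
    lagr_two_mul_add_one_eq_pairCoeff_mul hj (.inr ⟨rfl, rfl⟩) hneg hsq', hneg j hj, ← sub_mul,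
    pairCoeff_sub_neg h0 (by rw [hsq j hj.le, hsq N le_rfl]; exact hN j hj), hsq j hj.le,
    hsq N le_rfl]
  have hjN : e j - e N ≠ 0 := sub_ne_zero.2 (hN j hj)
  field_simp
  linear_combination (e (2 * N)) * hT

end pair

lemma norm_sq_lagr_pair_le {e : ℕ → ℂ} {N j : ℕ} (hj : j < N)
    (hneg : ∀ m < N, e (2 * m + 1) = -e (2 * m)) (hsq : ∀ m ≤ N, e (2 * m) ^ 2 = e m)
    (hN : ∀ i < N, e i ≠ e N) (hj1 : ‖e (2 * j)‖ = 1) (hN1 : ‖e (2 * N)‖ = 1) {z : ℂ}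
    (hz : ‖z‖ ≤ 1) (hlast : ‖lagr e N (N + 1) (z ^ 2)‖ ≤ 1) :
    ‖lagr e (2 * j) (2 * N + 1) z‖ ^ 2 + ‖lagr e (2 * j + 1) (2 * N + 1) z‖ ^ 2
      ≤ ‖lagr e j (N + 1) (z ^ 2)‖ ^ 2 / 2 + ‖lagr e j N (e N)‖ ^ 2
        + ‖lagr e j N (z ^ 2)‖ ^ 2 := by
  have h0 : e (2 * j) ≠ 0 := norm_ne_zero_iff.1 (by rw [hj1]; exact one_ne_zero)
  have hsub : ‖lagr e (2 * j) (2 * N + 1) z - lagr e (2 * j + 1) (2 * N + 1) z‖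
      ≤ ‖lagr e j N (e N)‖ + ‖lagr e j N (z ^ 2)‖ := by
    rw [lagr_pair_sub hj hneg hsq hN h0]
    refine (norm_add_le _ _).trans (add_le_add ?_ ?_)
    · rw [norm_neg, norm_mul, norm_div, hj1, hN1, div_one, one_mul, norm_mul]
      exact mul_le_of_le_one_left (norm_nonneg _) hlast
    · rw [norm_mul, norm_div, hj1, div_one]
      exact mul_le_of_le_one_left (norm_nonneg _) hz
  have hpar := parallelogram_law_with_norm ℂ
    (lagr e (2 * j) (2 * N + 1) z) (lagr e (2 * j + 1) (2 * N + 1) z)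
  rw [lagr_pair_add hj hneg hsq (hN j hj) h0] at hpar
  nlinarith [pow_le_pow_left₀ (norm_nonneg _) hsub 2,
    sq_nonneg (‖lagr e j N (e N)‖ - ‖lagr e j N (z ^ 2)‖)]

noncomputable def lebesgueFunSq (e : ℕ → ℂ) (k : ℕ) (z : ℂ) : ℝ :=
  ∑ j ∈ range k, ‖lagr e j k z‖ ^ 2

lemma lebesgueFunSq_two_mul_add_one_le {e : ℕ → ℂ} {N : ℕ}
    (hneg : ∀ m < N, e (2 * m + 1) = -e (2 * m)) (hsq : ∀ m ≤ N, e (2 * m) ^ 2 = e m)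
    (hN : ∀ i < N, e i ≠ e N) (hmod : ∀ m ≤ N, ‖e (2 * m)‖ = 1) {z : ℂ} (hz : ‖z‖ ≤ 1)
    (hlast : ‖lagr e N (N + 1) (z ^ 2)‖ ≤ 1) :
    lebesgueFunSq e (2 * N + 1) z
      ≤ lebesgueFunSq e (N + 1) (z ^ 2) / 2 + lebesgueFunSq e N (e N)
        + lebesgueFunSq e N (z ^ 2) + 1 / 2 := by
  have hpairs := sum_le_sum fun m (hm : m ∈ range N) =>
    norm_sq_lagr_pair_le (mem_range.1 hm) hneg hsq hN (hmod m (mem_range.1 hm).le)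
      (hmod N le_rfl) hz hlast
  have hlast_sq : ‖lagr e N (N + 1) (z ^ 2)‖ ^ 2 ≤ 1 := pow_le_one₀ (norm_nonneg _) hlast
  unfold lebesgueFunSq
  rw [sum_range_succ, sum_range_two_mul, lagr_two_mul_self_succ hneg hsq,
    sum_range_succ _ N]
  simp only [sum_add_distrib, ← sum_div] at hpairs ⊢
  linarith

lemma continuous_lagr (e : ℕ → ℂ) (j k : ℕ) : Continuous (lagr e j k) := by
  unfold lagr
  fun_prop

lemma lebesgueFunSq_le_quadLeb_sq (e : ℕ → ℂ) (k : ℕ) {w : ℂ} (hw : ‖w‖ ≤ 1) :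
    lebesgueFunSq e k w ≤ quadLeb e k ^ 2 := by
  have hcont : Continuous fun z => √(lebesgueFunSq e k z) := by
    unfold lebesgueFunSq
    have := continuous_lagr e
    fun_prop
  have hbdd := (isCompact_closedBall (0 : ℂ) 1).bddAbove_image hcont.continuousOn
  rw [Set.image_eq_range] at hbdd
  have hle : √(lebesgueFunSq e k w) ≤ quadLeb e k :=
    le_ciSup hbdd ⟨w, mem_closedBall_zero_iff.2 hw⟩
  exact (Real.sqrt_le_left ((Real.sqrt_nonneg _).trans hle)).1 hle

lemma quadLeb_sq_le {e : ℕ → ℂ} {k : ℕ} {C : ℝ}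
    (h : ∀ w : ℂ, ‖w‖ ≤ 1 → lebesgueFunSq e k w ≤ C) : quadLeb e k ^ 2 ≤ C := by
  have hC : 0 ≤ C := (sum_nonneg fun _ _ => sq_nonneg _).trans (h 0 (by simp))
  have hle : quadLeb e k ≤ √C := by
    have : Nonempty (Metric.closedBall (0 : ℂ) 1) := ⟨⟨0, by simp⟩⟩
    exact ciSup_le fun z => Real.sqrt_le_sqrt (h z (mem_closedBall_zero_iff.1 z.2))
  have hnonneg : 0 ≤ quadLeb e k := Real.iSup_nonneg fun _ => Real.sqrt_nonneg _
  exact (Real.le_sqrt hnonneg hC).1 hle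

theorem stmt14 (N : ℕ) (hN : 1 ≤ N) (e : ℕ → ℂ)
    (hdist : ∀ i ≤ 2 * N, ∀ j ≤ 2 * N, i ≠ j → e i ≠ e j)
    (hmod : ∀ i ≤ 2 * N, ‖e i‖ = 1)
    (hneg : ∀ j ≤ N, e (2 * j + 1) = -e (2 * j))
    (hsq : ∀ j ≤ N, (e (2 * j)) ^ 2 = e j)
    (hleja : ∀ z : ℂ, ‖z‖ ≤ 1 → ∀ k, 2 ≤ k → k ≤ 2 * N + 1 →
      ‖lagr e (k - 1) k z‖ ≤ 1) :
    quadLeb e (2 * N + 1) ^ 2 ≤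
      (1 / 2) * quadLeb e (N + 1) ^ 2 + 2 * quadLeb e N ^ 2 + 1 / 2 := by
  refine quadLeb_sq_le fun z hz => ?_
  have hz2 : ‖z ^ 2‖ ≤ 1 := by rw [norm_pow]; exact pow_le_one₀ (norm_nonneg _) hz
  have hlast := hleja (z ^ 2) hz2 (N + 1) (by omega) (by omega)
  rw [Nat.add_sub_cancel] at hlast
  have hrec := lebesgueFunSq_two_mul_add_one_le (fun m hm => hneg m hm.le) hsq
    (fun i hi => hdist i (by omega) N (by omega) hi.ne) (fun m hm => hmod _ (by omega)) hz hlast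
  have h₁ := lebesgueFunSq_le_quadLeb_sq e (N + 1) hz2
  have h₂ := lebesgueFunSq_le_quadLeb_sq e N (hmod N (by omega)).le
  have h₃ := lebesgueFunSq_le_quadLeb_sq e N hz2
  linarith
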